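/- There exists ε ∈ (0, 1) such that for all real M > 0 and Q with |Q| ≤ εM, and for every r with r₊(M,Q) ≤ r ≤ r_P(M,Q), one has 6r⁴ − 21Mr³ + (8M² + 8Q²)r² + 5MQ²r − 6Q⁴ ≤ 0. Equivalently, on that interval 2(r² − 3Mr + 2Q²)/r⁵ − (1/2)·d/dr( Υ(r)·V₂(r) ) ≤ 0. -/

import Mathlib

noncomputable section

/-- The Reissner–Nordström lapse function `Υ(r) = 1 - 2M/r + Q²/r²`. -/
def Upsilon (M Q r : ℝ) : ℝ := 1 - 2*M/r + Q^2/r^2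

/-- The event horizon radius `r₊ = M + √(M² - Q²)`. -/
def rplus (M Q : ℝ) : ℝ := M + Real.sqrt (M^2 - Q^2)

/-- The photon-sphere radius `r_P = (3M + √(9M² - 8Q²))/2`. -/
def rP (M Q : ℝ) : ℝ := (3*M + Real.sqrt (9*M^2 - 8*Q^2)) / 2

/-- The Regge–Wheeler potential `V₂(r) = r⁻²(4 - 2M/r - 2Q²/r²)`. -/
def V2 (M Q r : ℝ) : ℝ := (1 / r^2) * (4 - 2*M/r - 2*Q^2/r^2)


/-!
The derivative identity reduces both claims to the sign of the quartic. As `M ≤ r₊` and `r_P ≤ 3M`,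
it suffices to control the quartic for `M ≤ r ≤ 3M`. There the charge-free part
`r²(6r² - 21Mr + 8M²) = -r²(3(2r - M)(3M - r) + M²)` is at most `-M²r²`, while the charge terms add
at most `13Q²r²`; so any `ε` with `13ε² ≤ 1` works.
-/

def radialQuartic (M Q r : ℝ) : ℝ :=
  6*r^4 - 21*M*r^3 + (8*M^2 + 8*Q^2)*r^2 + 5*M*Q^2*r - 6*Q^4

theorem radialQuartic_nonpos {M Q r : ℝ} (hQ : 13 * Q^2 ≤ M^2) (hMr : M ≤ r) (hr : r ≤ 3*M) :
    radialQuartic M Q r ≤ 0 := by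
  have hM : 0 ≤ M := by linarith
  have hr0 : 0 ≤ r := hM.trans hMr
  have hfree : 6*r^2 - 21*M*r + 8*M^2 ≤ -M^2 := by
    nlinarith [mul_nonneg (by linarith : 0 ≤ 2*r - M) (by linarith : 0 ≤ 3*M - r)]
  have hcharge : 8*r^2 + 5*M*r ≤ 13*r^2 := by nlinarith
  calc radialQuartic M Q r
      = r^2 * (6*r^2 - 21*M*r + 8*M^2) + Q^2 * (8*r^2 + 5*M*r) - 6*Q^4 := by
        unfold radialQuartic; ring
    _ ≤ r^2 * (-M^2) + Q^2 * (13*r^2) - 0 := by gcongr; positivity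
    _ = r^2 * (13*Q^2 - M^2) := by ring
    _ ≤ 0 := mul_nonpos_of_nonneg_of_nonpos (sq_nonneg r) (by linarith)

theorem le_rplus (M Q : ℝ) : M ≤ rplus M Q :=
  le_add_of_nonneg_right (Real.sqrt_nonneg _)

theorem rP_le {M : ℝ} (Q : ℝ) (hM : 0 ≤ M) : rP M Q ≤ 3*M := by
  have : Real.sqrt (9*M^2 - 8*Q^2) ≤ 3*M :=
    Real.sqrt_le_iff.mpr ⟨by positivity, by nlinarith [sq_nonneg Q]⟩
  unfold rP; linarith

section Derivatives

variable (M Q : ℝ) {r : ℝ}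

theorem hasDerivAt_Upsilon (hr : r ≠ 0) :
    HasDerivAt (Upsilon M Q) (2*M/r^2 - 2*Q^2/r^3) r := by
  have h1 := (hasDerivAt_const r (2*M)).fun_div (hasDerivAt_id' r) hr
  have h2 := (hasDerivAt_const r (Q^2)).fun_div (hasDerivAt_pow 2 r) (pow_ne_zero 2 hr)
  refine (((hasDerivAt_const r 1).fun_sub h1).fun_add h2).congr_deriv ?_
  field_simp
  ring

theorem hasDerivAt_V2 (hr : r ≠ 0) :
    HasDerivAt (V2 M Q) (-8/r^3 + 6*M/r^4 + 8*Q^2/r^5) r := by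
  have h1 := (hasDerivAt_const r 1).fun_div (hasDerivAt_pow 2 r) (pow_ne_zero 2 hr)
  have h2 := (hasDerivAt_const r (2*M)).fun_div (hasDerivAt_id' r) hr
  have h3 := (hasDerivAt_const r (2*Q^2)).fun_div (hasDerivAt_pow 2 r) (pow_ne_zero 2 hr)
  refine (h1.fun_mul (((hasDerivAt_const r 4).fun_sub h2).fun_sub h3)).congr_deriv ?_
  field_simp
  ring

theorem sub_half_deriv_Upsilon_mul_V2 (hr : r ≠ 0) :
    2*(r^2 - 3*M*r + 2*Q^2) / r^5 - (1/2) * deriv (fun s => Upsilon M Q s * V2 M Q s) r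
      = radialQuartic M Q r / r^7 := by
  rw [((hasDerivAt_Upsilon M Q hr).fun_mul (hasDerivAt_V2 M Q hr)).deriv]
  unfold Upsilon V2 radialQuartic
  field_simp
  ring

end Derivatives

theorem quartic_V2_nonpos_small_charge :
    ∃ ε : ℝ, 0 < ε ∧ ε < 1 ∧
      ∀ M Q : ℝ, 0 < M → |Q| ≤ ε * M →
        ∀ r : ℝ, rplus M Q ≤ r → r ≤ rP M Q →
          (6*r^4 - 21*M*r^3 + (8*M^2 + 8*Q^2)*r^2 + 5*M*Q^2*r - 6*Q^4 ≤ 0) ∧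
          (2*(r^2 - 3*M*r + 2*Q^2) / r^5
            - (1/2) * deriv (fun s => Upsilon M Q s * V2 M Q s) r ≤ 0) := by
  refine ⟨1/4, by norm_num, by norm_num, fun M Q hM hQ r hrplus hrP => ?_⟩
  have hQ2 : 13 * Q^2 ≤ M^2 := by
    have := mul_self_le_mul_self (abs_nonneg Q) hQ
    rw [abs_mul_abs_self] at this
    nlinarith
  have hMr : M ≤ r := (le_rplus M Q).trans hrplus
  have hr : 0 < r := hM.trans_le hMr
  have hquartic : radialQuartic M Q r ≤ 0 :=
    radialQuartic_nonpos hQ2 hMr (hrP.trans (rP_le Q hM.le))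
  refine ⟨hquartic, ?_⟩
  rw [sub_half_deriv_Upsilon_mul_V2 M Q hr.ne']
  exact div_nonpos_of_nonpos_of_nonneg hquartic (by positivity)
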